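/- arXiv:2011.14205 — 7 statements merged into one kernel-verified Lean document; each statement's English description precedes it below -/
import Mathlib

section
/- Let R be a (not necessarily commutative) ring with unity, let a_1, ..., a_l be elements of R such that 1 - a_j is invertible for each j, and set a = a_1 + ... + a_l. Then (1 - a) * (1 + \sum_{j=1}^{l} a_j (1 - a_j)^{-1}) = 1 - \sum_{(j,k): j \neq k} a_j a_k (1 - a_k)^{-1}, where the last sum runs over all ordered pairs (j,k) with 1 \le j,k \le l and j \neq k. -/
/-!
Put `b j = a j (1 - a j)⁻¹`. Then `a j b j = b j - a j`, so in the expansion of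
`(1 - ∑ a j)(1 + ∑ b k)` the diagonal terms `a j b j` of the double sum cancel the linear terms
`∑ b j - ∑ a j`, and only the off-diagonal terms `a j b k`, `j ≠ k`, survive.
-/

namespace Finset

theorem sum_mul_sum_eq_sum_offDiag_add_sum {ι R : Type*} [NonUnitalNonAssocSemiring R]
    [DecidableEq ι] (s : Finset ι) (f g : ι → R) :
    (∑ i ∈ s, f i) * ∑ j ∈ s, g j = ∑ p ∈ s.offDiag, f p.1 * g p.2 + ∑ i ∈ s, f i * g i := by
  rw [sum_mul_sum, ← sum_product', ← diag_union_offDiag, sum_union (disjoint_diag_offDiag s),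
    sum_diag, add_comm]

end Finset

theorem Ring.mul_mul_inverse_one_sub {R : Type*} [Ring R] {x : R} (hx : IsUnit (1 - x)) :
    x * (x * Ring.inverse (1 - x)) = x * Ring.inverse (1 - x) - x := by
  have hcancel := Ring.mul_inverse_cancel _ hx
  rw [sub_mul, one_mul, sub_eq_iff_eq_add'] at hcancel
  have hinv : x * Ring.inverse (1 - x) = Ring.inverse (1 - x) - 1 :=
    eq_sub_of_add_eq hcancel.symm
  simpa only [mul_sub, mul_one] using congrArg (x * ·) hinv

theorem one_sub_sum_mul_one_add_sum {ι R : Type*} [Ring R] [DecidableEq ι] (s : Finset ι)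
    (a b : ι → R) (hab : ∀ i ∈ s, a i * b i = b i - a i) :
    (1 - ∑ i ∈ s, a i) * (1 + ∑ i ∈ s, b i) = 1 - ∑ p ∈ s.offDiag, a p.1 * b p.2 := by
  have hdiag : ∑ i ∈ s, a i * b i = ∑ i ∈ s, b i - ∑ i ∈ s, a i := by
    rw [← Finset.sum_sub_distrib]
    exact Finset.sum_congr rfl hab
  calc (1 - ∑ i ∈ s, a i) * (1 + ∑ i ∈ s, b i)
      = 1 + ∑ i ∈ s, b i - ∑ i ∈ s, a i - (∑ i ∈ s, a i) * ∑ i ∈ s, b i := by noncomm_ring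
    _ = 1 - ∑ p ∈ s.offDiag, a p.1 * b p.2 := by
      rw [Finset.sum_mul_sum_eq_sum_offDiag_add_sum, hdiag]
      abel

/-- Varzugin's algebraic identity for Beals-Coifman operators:
if `1 - a j` is invertible for each `j` and `a = ∑ j, a j`, then
`(1 - a) * (1 + ∑ j, a j (1 - a j)⁻¹) = 1 - ∑_{j ≠ k} a j * a k * (1 - a k)⁻¹`. -/
theorem varzugin_identity {R : Type*} [Ring R] {l : ℕ} (a : Fin l → R)
    (h : ∀ j, IsUnit (1 - a j)) :
    (1 - ∑ j, a j) * (1 + ∑ j, a j * Ring.inverse (1 - a j)) =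
      1 - ∑ p ∈ (Finset.univ : Finset (Fin l)).offDiag,
            a p.1 * a p.2 * Ring.inverse (1 - a p.2) := by
  simp_rw [mul_assoc]
  exact one_sub_sum_mul_one_add_sum _ a _ fun j _ => Ring.mul_mul_inverse_one_sub (h j)
end

section
/- Let R be a (not necessarily commutative) ring with unity, let a_1, ..., a_l be elements of R such that 1 - a_j is invertible for each j, set a = a_1 + ... + a_l, X = 1 + \sum_{j=1}^{l} a_j (1 - a_j)^{-1}, and Y = \sum_{(j,k): j \neq k} a_j a_k (1 - a_k)^{-1} (sum over ordered pairs with j \neq k). If 1 - Y is invertible, then (1 - a) * X * (1 - Y)^{-1} = 1; in particular X * (1 - Y)^{-1} is a right inverse of 1 - a. -/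
/-!
Write `s = ∑ j, a j` and `S = ∑ j, a j (1 - a j)⁻¹`, so that `X = 1 + S` and
`(1 - s) X = 1 + (S - s S) - s`. Splitting the double sum `s S` into its diagonal and
off-diagonal parts gives `s S = ∑ j, a j a j (1 - a j)⁻¹ + Y`, and on the diagonal
`a j (1 - a j)⁻¹ - a j a j (1 - a j)⁻¹ = a j (1 - a j)(1 - a j)⁻¹ = a j`. Hence
`S - s S = s - Y` and `(1 - s) X = 1 - Y`, which `(1 - Y)⁻¹` inverts on the right.
-/

open Finset

theorem Finset.sum_mul_sum_eq_sum_add_sum_offDiag {ι R : Type*} [Fintype ι] [DecidableEq ι]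
    [NonUnitalNonAssocSemiring R] (f g : ι → R) :
    (∑ i, f i) * ∑ i, g i = ∑ i, f i * g i + ∑ p ∈ (univ : Finset ι).offDiag, f p.1 * g p.2 := by
  rw [sum_mul_sum, ← sum_product', ← diag_union_offDiag,
    sum_union (disjoint_diag_offDiag _), sum_diag]

theorem mul_inverse_one_sub_sub_mul_mul_inverse_one_sub {R : Type*} [Ring R] {b : R}
    (hb : IsUnit (1 - b)) (a : R) :
    a * Ring.inverse (1 - b) - a * (b * Ring.inverse (1 - b)) = a := by
  rw [← mul_sub, ← one_sub_mul, ← mul_assoc, mul_assoc, Ring.mul_inverse_cancel _ hb, mul_one]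

theorem one_sub_sum_mul_one_add_sum_mul_inverse {R : Type*} [Ring R] {ι : Type*} [Fintype ι]
    [DecidableEq ι] (a : ι → R) (h : ∀ j, IsUnit (1 - a j)) :
    (1 - ∑ j, a j) * (1 + ∑ j, a j * Ring.inverse (1 - a j)) =
      1 - ∑ p ∈ (univ : Finset ι).offDiag, a p.1 * a p.2 * Ring.inverse (1 - a p.2) := by
  set s := ∑ j, a j
  set S := ∑ j, a j * Ring.inverse (1 - a j)
  set Y := ∑ p ∈ (univ : Finset ι).offDiag, a p.1 * a p.2 * Ring.inverse (1 - a p.2)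
  have hsS : s * S = ∑ j, a j * (a j * Ring.inverse (1 - a j)) + Y := by
    simp only [s, S, Y, sum_mul_sum_eq_sum_add_sum_offDiag, mul_assoc]
  have hdiag : S - ∑ j, a j * (a j * Ring.inverse (1 - a j)) = s := by
    simp only [S, s, ← sum_sub_distrib, mul_inverse_one_sub_sub_mul_mul_inverse_one_sub (h _)]
  calc (1 - s) * (1 + S) = 1 + (S - s * S) - s := by noncomm_ring
    _ = 1 - Y := by rw [hsS, sub_add_eq_sub_sub, hdiag]; abel

/-- The resolvent expansion underlying the separation-of-contributions lemma:
with `a = ∑ j, a j`, `X = 1 + ∑ j, a j (1 - a j)⁻¹`,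
`Y = ∑_{j ≠ k} a j * a k * (1 - a k)⁻¹`, if each `1 - a j` and `1 - Y` are
invertible then `(1 - a) * X * (1 - Y)⁻¹ = 1`, i.e. `X * (1 - Y)⁻¹` is a right
inverse of `1 - a`. -/
theorem resolvent_expansion {R : Type*} [Ring R] {l : ℕ} (a : Fin l → R)
    (h : ∀ j, IsUnit (1 - a j)) (X Y : R)
    (hX : X = 1 + ∑ j, a j * Ring.inverse (1 - a j))
    (hY : Y = ∑ p ∈ (Finset.univ : Finset (Fin l)).offDiag,
            a p.1 * a p.2 * Ring.inverse (1 - a p.2))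
    (hYunit : IsUnit (1 - Y)) :
    (1 - ∑ j, a j) * X * Ring.inverse (1 - Y) = 1 ∧
    (1 - ∑ j, a j) * (X * Ring.inverse (1 - Y)) = 1 := by
  have hright : (1 - ∑ j, a j) * X * Ring.inverse (1 - Y) = 1 := by
    rw [hX, one_sub_sum_mul_one_add_sum_mul_inverse a h, ← hY, Ring.mul_inverse_cancel _ hYunit]
  exact ⟨hright, by rwa [← mul_assoc]⟩
end

section
/- Let \alpha \in (0, \pi/2), z_0 \in \mathbb{R}, \eta_0 \in \mathbb{R}, and let \Omega = \{ z_0 + \rho e^{i\phi} : \rho > 0, 0 < \phi < \alpha \}. Let \mathcal{K} : [0, \alpha] \to \mathbb{R} be continuously differentiable with \mathcal{K}(0) = 1, \mathcal{K}(\alpha) = 0 and 0 \le \mathcal{K} \le 1. Let R : \mathbb{R} \to \mathbb{C} be bounded and continuously differentiable with R' \in L^2(\mathbb{R}). Let \delta : \Omega \to \mathbb{C} be holomorphic, \delta_0 \in \mathbb{C} \setminus \{0\}, and C_1, C_2 > 0 be such that for all z \in \Omega: |\delta(z)| \le C_1, |\delta(z)^{-1}| \le C_1, |\delta_0 (z -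 z_0)^{i\eta_0}| \le C_1, |\delta_0^{-1} (z - z_0)^{-i\eta_0}| \le C_1, and |\delta(z) - \delta_0 (z - z_0)^{i\eta_0}| \le C_2 |z - z_0|^{1/2}. Define E : \Omega \to \mathbb{C} by E(z) = \mathcal{K}(\arg(z - z_0))\, R(\mathrm{Re}\, z)\, \delta(z)^{-2} + (1 - \mathcal{K}(\arg(z - z_0)))\, R(z_0)\, \delta_0^{-2} (z - z_0)^{-2i\eta_0}. Then there exists a constant C > 0, depending only on C_1, C_2, \sup|\mathcal{K}'|, \|R'\|_{L^2}, and \sup_{\mathbb{R}}|R|, such that for all z \in \Omega the Wirtinger derivative satisfies |\bar{\partial} E(z)| \le C\big( |z - z_0|^{-1/2} + |R'(\mathrm{Re}\, z)| \big). -/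
open MeasureTheory

/-- The Wirtinger derivative `∂̄F = (∂F/∂x + i ∂F/∂y)/2` with respect to `z̄`. -/
noncomputable def dbar (F : ℂ → ℂ) (z : ℂ) : ℂ :=
  (deriv (fun x : ℝ => F ((x : ℂ) + z.im * Complex.I)) z.re
    + Complex.I * deriv (fun y : ℝ => F ((z.re : ℂ) + y * Complex.I)) z.im) / 2

/-!
Write `E = H + k (r h - H)` with `k = K (arg (z - z₀))`, `r = R (re z)` and the holomorphic
functions `h = δ⁻²`, `H = R z₀ δ₀⁻² (z - z₀)^(-2iη₀)`. The Leibniz rule for `∂̄` gives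
`∂̄E = ∂̄k · (r h - H) + k · R'(re z)/2 · h`, where `|∂̄k| ≤ sup |K'| / (2 |z - z₀|)`. With
`q = δ₀ (z - z₀)^(iη₀)` one has `H = R z₀ q⁻²` and
`r h - H = (R (re z) - R z₀) δ⁻² + R z₀ δ⁻² q⁻² (q - δ) (q + δ)`, which is `O(|z - z₀|^(1/2))`:
the first term by Cauchy–Schwarz, `|R x - R z₀| ≤ ‖R'‖₂ |x - z₀|^(1/2)`, the second by the
hypothesis on `δ - q`.

The bound on `δ⁻¹` does not exclude zeros of `δ` (as `0⁻¹ = 0`), and `δ⁻²` is holomorphic only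
where `δ ≠ 0`. But `|δ| ≥ 1/C₁` wherever `δ ≠ 0`, so on the connected sector `δ` vanishes either
nowhere or everywhere; near `z₀` it is close to `q`, and `|q| ≥ 1/C₁`.
-/

open Complex Set
open scoped Real ComplexConjugate

theorem norm_sub_le_eLpNorm_deriv_mul_rpow {E : Type*} [NormedAddCommGroup E] [NormedSpace ℝ E]
    [CompleteSpace E] {f : ℝ → E} (hf : Differentiable ℝ f) (hf' : MemLp (deriv f) 2 volume)
    (a b : ℝ) : ‖f b - f a‖ ≤ (eLpNorm (deriv f) 2 volume).toReal * |b - a| ^ ((1 : ℝ) / 2) := by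
  wlog hab : a ≤ b generalizing a b
  · simpa [norm_sub_rev, abs_sub_comm] using this b a (le_of_not_ge hab)
  set μ := volume.restrict (Ioc a b)
  have hint : Integrable (deriv f) μ := (hf'.restrict _).integrable one_le_two
  have hL1 : eLpNorm (deriv f) 1 μ ≤
      eLpNorm (deriv f) 2 volume * ENNReal.ofReal (b - a) ^ ((1 : ℝ) / 2) :=
    calc eLpNorm (deriv f) 1 μ ≤ eLpNorm (deriv f) 2 μ * μ univ ^ ((1 : ℝ) / 1 - 1 / 2) := by
          simpa using eLpNorm_le_eLpNorm_mul_rpow_measure_univ one_le_two hint.aestronglyMeasurable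
      _ ≤ _ := by
          rw [Measure.restrict_apply_univ, Real.volume_Ioc]
          norm_num
          gcongr
          exact Measure.restrict_le_self
  have hftc : ∫ x in a..b, deriv f x = f b - f a :=
    intervalIntegral.integral_deriv_eq_sub (fun x _ => hf x)
      ((intervalIntegrable_iff_integrableOn_Ioc_of_le hab).2 hint)
  rw [← hftc, intervalIntegral.integral_of_le hab, abs_of_nonneg (sub_nonneg.2 hab),
    ← toReal_enorm, ← ENNReal.toReal_ofReal (sub_nonneg.2 hab), ENNReal.toReal_rpow,
    ← ENNReal.toReal_mul]
  refine ENNReal.toReal_mono (by finiteness) ?_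
  exact (enorm_integral_le_lintegral_enorm _).trans
    (eLpNorm_one_eq_lintegral_enorm.symm.le.trans hL1)

def argSector (z₀ : ℂ) (α : ℝ) : Set ℂ := {w | 0 < (w - z₀).arg ∧ (w - z₀).arg < α}

section ArgSector

variable {z₀ : ℂ} {α : ℝ}

theorem sub_mem_slitPlane_of_mem_argSector (hα : α ≤ π) {w : ℂ} (hw : w ∈ argSector z₀ α) :
    w - z₀ ∈ slitPlane := by
  refine mem_slitPlane_iff_arg.2 ⟨(hw.2.trans_le hα).ne, fun h => ?_⟩
  simpa [h] using hw.1

theorem isOpen_argSector (hα : α ≤ π) : IsOpen (argSector z₀ α) := by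
  have : argSector z₀ α = (· - z₀) ⁻¹' (slitPlane ∩ arg ⁻¹' Ioo 0 α) :=
    Set.ext fun w => ⟨fun hw => ⟨sub_mem_slitPlane_of_mem_argSector hα hw, hw⟩, fun hw => hw.2⟩
  rw [this]
  exact (continuousOn_arg.isOpen_inter_preimage isOpen_slitPlane isOpen_Ioo).preimage
    (continuous_sub_right z₀)

theorem argSector_eq_image (hα : α ≤ π) :
    argSector z₀ α =
      (fun x : ℝ × ℝ => z₀ + x.1 * (cos x.2 + sin x.2 * I)) '' (Ioi 0 ×ˢ Ioo 0 α) := by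
  ext w
  constructor
  · intro hw
    have hne := slitPlane_ne_zero (sub_mem_slitPlane_of_mem_argSector hα hw)
    exact ⟨(‖w - z₀‖, (w - z₀).arg), ⟨norm_pos_iff.2 hne, hw⟩, by simp [norm_mul_cos_add_sin_mul_I]⟩
  · rintro ⟨⟨ρ, φ⟩, ⟨hρ, hφ⟩, rfl⟩
    have : (ρ * (cos φ + sin φ * I)).arg = φ :=
      arg_mul_cos_add_sin_mul_I hρ ⟨by linarith [hφ.1, Real.pi_pos], hφ.2.le.trans hα⟩
    simpa [argSector, this] using hφ

theorem isPreconnected_argSector (hα : α ≤ π) : IsPreconnected (argSector z₀ α) := by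
  rw [argSector_eq_image hα]
  exact (isPreconnected_Ioi.prod isPreconnected_Ioo).image _ (by fun_prop)

theorem exists_mem_argSector_norm_sub_eq (hα : 0 < α) (hα' : α ≤ π) {r : ℝ} (hr : 0 < r) :
    ∃ w ∈ argSector z₀ α, ‖w - z₀‖ = r := by
  refine ⟨z₀ + r * (cos (α / 2 : ℝ) + sin (α / 2 : ℝ) * I), ?_, ?_⟩
  · rw [argSector_eq_image hα']
    exact ⟨(r, α / 2), ⟨hr, by constructor <;> linarith⟩, rfl⟩
  · rw [add_sub_cancel_left, norm_mul, norm_cos_add_sin_mul_I, norm_real, Real.norm_of_nonneg hr.le,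
      mul_one]

end ArgSector

theorem inv_le_norm_of_norm_inv_le {𝕜 : Type*} [NormedDivisionRing 𝕜] {x : 𝕜} (hx : x ≠ 0)
    {C : ℝ} (hC : 0 < C) (h : ‖x⁻¹‖ ≤ C) : C⁻¹ ≤ ‖x‖ := by
  rw [norm_inv] at h
  exact (inv_le_comm₀ (norm_pos_iff.2 hx) hC).1 h

theorem IsPreconnected.forall_ne_zero_of_norm_inv_le {X 𝕜 : Type*} [TopologicalSpace X]
    [NormedDivisionRing 𝕜] {S : Set X} (hS : IsPreconnected S) {f : X → 𝕜} (hf : ContinuousOn f S)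
    {C : ℝ} (hC : 0 < C) (hbound : ∀ x ∈ S, ‖(f x)⁻¹‖ ≤ C) {a : X} (ha : a ∈ S) (hfa : f a ≠ 0) :
    ∀ x ∈ S, f x ≠ 0 := by
  intro x hx hfx
  have hmid : C⁻¹ / 2 ∈ Icc ‖f x‖ ‖f a‖ :=
    ⟨by simp [hfx]; positivity,
      (half_le_self (by positivity)).trans (inv_le_norm_of_norm_inv_le hfa hC (hbound a ha))⟩
  obtain ⟨y, hy, hfy⟩ := hS.intermediate_value hx ha hf.norm hmid
  have := hbound y hy
  rw [norm_inv, show ‖f y‖ = C⁻¹ / 2 from hfy] at this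
  field_simp at this
  linarith

theorem forall_ne_zero_of_norm_sub_le {δ q : ℂ → ℂ} {z₀ : ℂ} {α C₁ C₂ : ℝ} (hα : 0 < α)
    (hα' : α ≤ π) (hδ : ContinuousOn δ (argSector z₀ α)) (hC₁ : 0 < C₁) (hC₂ : 0 < C₂)
    (hδinv : ∀ w ∈ argSector z₀ α, ‖(δ w)⁻¹‖ ≤ C₁) (hq : ∀ w ∈ argSector z₀ α, q w ≠ 0)
    (hqinv : ∀ w ∈ argSector z₀ α, ‖(q w)⁻¹‖ ≤ C₁)
    (hδq : ∀ w ∈ argSector z₀ α, ‖δ w - q w‖ ≤ C₂ * ‖w - z₀‖ ^ ((1 : ℝ) / 2)) :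
    ∀ w ∈ argSector z₀ α, δ w ≠ 0 := by
  have hε : 0 < (2 * C₁ * C₂)⁻¹ := by positivity
  obtain ⟨a, ha, har⟩ := exists_mem_argSector_norm_sub_eq (z₀ := z₀) hα hα' (pow_pos hε 2)
  refine (isPreconnected_argSector hα').forall_ne_zero_of_norm_inv_le hδ hC₁ hδinv ha fun hδa => ?_
  have hqa := inv_le_norm_of_norm_inv_le (hq a ha) hC₁ (hqinv a ha)
  have hδqa := hδq a ha
  rw [hδa, zero_sub, norm_neg, har, ← Real.sqrt_eq_rpow, Real.sqrt_sq hε.le] at hδqa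
  have : C₂ * (2 * C₁ * C₂)⁻¹ < C₁⁻¹ := by
    rw [show C₂ * (2 * C₁ * C₂)⁻¹ = (2 * C₁)⁻¹ by field_simp]
    exact inv_strictAnti₀ hC₁ (by linarith)
  linarith

theorem norm_mul_inv_sq_sub_mul_inv_sq_le {𝕜 : Type*} [NormedField 𝕜] {a b r s : 𝕜}
    {C ε ρ M : ℝ} (ha : a ≠ 0) (hb : b ≠ 0) (ha₁ : ‖a‖ ≤ C) (hb₁ : ‖b‖ ≤ C) (ha₂ : ‖a⁻¹‖ ≤ C)
    (hb₂ : ‖b⁻¹‖ ≤ C) (hab : ‖a - b‖ ≤ ε) (hrs : ‖r - s‖ ≤ ρ) (hs : ‖s‖ ≤ M) :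
    ‖r * (a ^ 2)⁻¹ - s * (b ^ 2)⁻¹‖ ≤ C ^ 2 * ρ + 2 * C ^ 5 * M * ε := by
  have hC : 0 ≤ C := (norm_nonneg _).trans ha₁
  have hM : 0 ≤ M := (norm_nonneg _).trans hs
  have hρ : 0 ≤ ρ := (norm_nonneg _).trans hrs
  have hε : 0 ≤ ε := (norm_nonneg _).trans hab
  have hdecomp : r * (a ^ 2)⁻¹ - s * (b ^ 2)⁻¹ =
      (r - s) * a⁻¹ ^ 2 + s * (a⁻¹ * b⁻¹) ^ 2 * ((a - b) * -(a + b)) := by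
    field_simp; ring
  calc ‖r * (a ^ 2)⁻¹ - s * (b ^ 2)⁻¹‖
      ≤ ‖r - s‖ * ‖a⁻¹‖ ^ 2 + ‖s‖ * (‖a⁻¹‖ * ‖b⁻¹‖) ^ 2 * (‖a - b‖ * (‖a‖ + ‖b‖)) := by
        rw [hdecomp]
        refine (norm_add_le _ _).trans ?_
        simp only [norm_mul, norm_pow, norm_neg]
        gcongr
        exact norm_add_le a b
    _ ≤ ρ * C ^ 2 + M * (C * C) ^ 2 * (ε * (C + C)) := by gcongr
    _ = C ^ 2 * ρ + 2 * C ^ 5 * M * ε := by ring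

section Dbar

variable {f g : ℂ → ℂ} {w : ℂ}

theorem HasFDerivAt.dbar_eq {L : ℂ →L[ℝ] ℂ} (h : HasFDerivAt f L w) :
    dbar f w = (L 1 + I * L I) / 2 := by
  have hx : HasDerivAt (fun x : ℝ => (x : ℂ) + w.im * I) 1 w.re :=
    (hasDerivAt_id _).ofReal_comp.add_const _
  have hy : HasDerivAt (fun y : ℝ => (w.re : ℂ) + y * I) I w.im := by
    simpa using ((hasDerivAt_id _).ofReal_comp.mul_const I).const_add (w.re : ℂ)
  exact congr_arg₂ (fun a b => (a + I * b) / 2)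
    (h.comp_hasDerivAt_of_eq _ hx (re_add_im w).symm).deriv
    (h.comp_hasDerivAt_of_eq _ hy (re_add_im w).symm).deriv

theorem dbar_add (hf : DifferentiableAt ℝ f w) (hg : DifferentiableAt ℝ g w) :
    dbar (fun z => f z + g z) w = dbar f w + dbar g w := by
  refine (hf.hasFDerivAt.add hg.hasFDerivAt).dbar_eq.trans ?_
  rw [hf.hasFDerivAt.dbar_eq, hg.hasFDerivAt.dbar_eq]
  simp only [add_apply]
  ring

theorem dbar_sub (hf : DifferentiableAt ℝ f w) (hg : DifferentiableAt ℝ g w) :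
    dbar (fun z => f z - g z) w = dbar f w - dbar g w := by
  refine (hf.hasFDerivAt.sub hg.hasFDerivAt).dbar_eq.trans ?_
  rw [hf.hasFDerivAt.dbar_eq, hg.hasFDerivAt.dbar_eq]
  simp only [sub_apply]
  ring

theorem dbar_mul (hf : DifferentiableAt ℝ f w) (hg : DifferentiableAt ℝ g w) :
    dbar (fun z => f z * g z) w = dbar f w * g w + f w * dbar g w := by
  refine (hf.hasFDerivAt.mul hg.hasFDerivAt).dbar_eq.trans ?_
  rw [hf.hasFDerivAt.dbar_eq, hg.hasFDerivAt.dbar_eq]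
  simp only [add_apply, smul_apply, smul_eq_mul]
  ring

theorem DifferentiableAt.dbar_eq_zero (hf : DifferentiableAt ℂ f w) : dbar f w = 0 := by
  rw [(hf.hasFDerivAt.restrictScalars ℝ).dbar_eq]
  have : fderiv ℂ f w I = I * fderiv ℂ f w 1 := by
    rw [← smul_eq_mul, ← map_smul, smul_eq_mul, mul_one]
  simp [this, ← mul_assoc]

theorem dbar_comp_re {r : ℝ → ℂ} (hr : DifferentiableAt ℝ r w.re) :
    dbar (fun z => r z.re) w = deriv r w.re / 2 := by
  refine (hr.hasDerivAt.hasFDerivAt.comp w reCLM.hasFDerivAt).dbar_eq.trans ?_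
  simp

theorem hasFDerivAt_arg_sub {z₀ : ℂ} (hw : w - z₀ ∈ slitPlane) :
    HasFDerivAt (fun z => (z - z₀).arg)
      (imCLM.comp ((ContinuousLinearMap.toSpanSingleton ℂ (w - z₀)⁻¹).restrictScalars ℝ)) w := by
  have hlog := ((hasStrictDerivAt_log hw).hasDerivAt.comp w
    ((hasDerivAt_id w).sub_const z₀)).hasFDerivAt.restrictScalars ℝ
  simp only [mul_one] at hlog
  simpa only [Function.comp_def, id, imCLM_apply, log_im] using imCLM.hasFDerivAt.comp w hlog

theorem dbar_ofReal_comp_arg_sub {K : ℝ → ℝ} {z₀ : ℂ} (hw : w - z₀ ∈ slitPlane)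
    (hK : DifferentiableAt ℝ K (w - z₀).arg) :
    dbar (fun z => (K (z - z₀).arg : ℂ)) w = deriv K (w - z₀).arg * I * conj (w - z₀)⁻¹ / 2 := by
  refine (ofRealCLM.hasFDerivAt.comp w
    (hK.hasDerivAt.hasFDerivAt.comp w (hasFDerivAt_arg_sub hw))).dbar_eq.trans ?_
  simp only [ContinuousLinearMap.comp_apply, ContinuousLinearMap.coe_restrictScalars',
    ContinuousLinearMap.toSpanSingleton_apply, smul_eq_mul, one_mul, imCLM_apply, ofRealCLM_apply]
  generalize (w - z₀)⁻¹ = q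
  apply Complex.ext <;> simp <;> ring

theorem dbar_interpolation {k r h H : ℂ → ℂ} (hk : DifferentiableAt ℝ k w)
    (hr : DifferentiableAt ℝ r w) (hh : DifferentiableAt ℂ h w) (hH : DifferentiableAt ℂ H w) :
    dbar (fun z => k z * r z * h z + (1 - k z) * H z) w =
      dbar k w * (r w * h w - H w) + k w * dbar r w * h w := by
  have hh' := hh.restrictScalars ℝ
  have hH' := hH.restrictScalars ℝ
  have hrh := hr.mul hh'
  have hsplit : (fun z => k z * r z * h z + (1 - k z) * H z) =
      fun z => H z + k z * (r z * h z - H z) := by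
    funext z; ring
  rw [hsplit, dbar_add (g := fun z => k z * (r z * h z - H z)) hH' (hk.mul (hrh.sub hH')),
    dbar_mul (g := fun z => r z * h z - H z) hk (hrh.sub hH'),
    dbar_sub (f := fun z => r z * h z) hrh hH',
    dbar_mul hr hh', hh.dbar_eq_zero, hH.dbar_eq_zero]
  ring

end Dbar

theorem inv_mul_cpow_neg (a p s : ℂ) : a⁻¹ * p ^ (-s) = (a * p ^ s)⁻¹ := by
  rw [cpow_neg, mul_inv]

theorem inv_sq_mul_cpow_neg_two_mul (a p s : ℂ) :
    (a ^ 2)⁻¹ * p ^ (-(2 * s)) = ((a * p ^ s) ^ 2)⁻¹ := by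
  rw [cpow_neg, show (2 : ℂ) * s = (2 : ℕ) * s by norm_num, cpow_nat_mul, ← mul_inv, mul_pow]

noncomputable def lensExtension (K : ℝ → ℝ) (R : ℝ → ℂ) (δ : ℂ → ℂ) (z₀ η₀ : ℝ) (δ₀ : ℂ)
    (w : ℂ) : ℂ :=
  (K ((w - (z₀ : ℂ)).arg) : ℂ) * R w.re * ((δ w) ^ 2)⁻¹
    + (1 - (K ((w - (z₀ : ℂ)).arg) : ℂ)) * R z₀ * (δ₀ ^ 2)⁻¹ *
      (w - (z₀ : ℂ)) ^ (-(2 * Complex.I * (η₀ : ℂ)))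

section LensExtension

variable {K : ℝ → ℝ} {R : ℝ → ℂ} {δ : ℂ → ℂ} {z₀ η₀ : ℝ} {δ₀ w : ℂ}

theorem dbar_lensExtension (hw : w - z₀ ∈ slitPlane) (hK : DifferentiableAt ℝ K (w - z₀).arg)
    (hR : DifferentiableAt ℝ R w.re) (hδ : DifferentiableAt ℂ δ w) (hδw : δ w ≠ 0) :
    dbar (lensExtension K R δ z₀ η₀ δ₀) w =
      deriv K (w - z₀).arg * I * conj (w - z₀)⁻¹ / 2 *
          (R w.re * ((δ w) ^ 2)⁻¹ - R z₀ * ((δ₀ * (w - z₀) ^ (I * η₀)) ^ 2)⁻¹)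
        + K (w - z₀).arg * (deriv R w.re / 2) * ((δ w) ^ 2)⁻¹ := by
  have hk : DifferentiableAt ℝ (fun z => (K (z - (z₀ : ℂ)).arg : ℂ)) w :=
    ofRealCLM.differentiableAt.comp w (hK.comp w (hasFDerivAt_arg_sub hw).differentiableAt)
  have hr : DifferentiableAt ℝ (fun z => R z.re) w := hR.comp w reCLM.differentiableAt
  have hh : DifferentiableAt ℂ (fun z => (δ z ^ 2)⁻¹) w := (hδ.pow 2).inv (pow_ne_zero 2 hδw)
  have hH : DifferentiableAt ℂ
      (fun z => R z₀ * ((δ₀ ^ 2)⁻¹ * (z - z₀) ^ (-(2 * I * η₀)))) w := by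
    fun_prop (disch := assumption)
  have hsplit : lensExtension K R δ z₀ η₀ δ₀ = fun z =>
      (K (z - (z₀ : ℂ)).arg : ℂ) * R z.re * (δ z ^ 2)⁻¹ +
        (1 - (K (z - (z₀ : ℂ)).arg : ℂ)) * (R z₀ * ((δ₀ ^ 2)⁻¹ * (z - z₀) ^ (-(2 * I * η₀)))) := by
    funext z; simp only [lensExtension]; ring
  rw [hsplit, dbar_interpolation hk hr hh hH, dbar_ofReal_comp_arg_sub hw hK, dbar_comp_re hR,
    mul_assoc 2, inv_sq_mul_cpow_neg_two_mul]

theorem norm_dbar_lensExtension_le {C₁ C₂ M MK N₂ : ℝ} (hw : w - z₀ ∈ slitPlane)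
    (hK : DifferentiableAt ℝ K (w - z₀).arg) (hR : DifferentiableAt ℝ R w.re)
    (hδ : DifferentiableAt ℂ δ w) (hδw : δ w ≠ 0) (hq : δ₀ * (w - z₀) ^ (I * η₀) ≠ 0)
    (hK' : ‖deriv K (w - z₀).arg‖ ≤ MK) (hK01 : K (w - z₀).arg ∈ Icc 0 1) (hRz₀ : ‖R z₀‖ ≤ M)
    (hRw : ‖R w.re - R z₀‖ ≤ N₂ * ‖w - z₀‖ ^ ((1 : ℝ) / 2))
    (h1 : ‖δ w‖ ≤ C₁) (h2 : ‖(δ w)⁻¹‖ ≤ C₁) (h3 : ‖δ₀ * (w - z₀) ^ (I * η₀)‖ ≤ C₁)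
    (h4 : ‖(δ₀ * (w - z₀) ^ (I * η₀))⁻¹‖ ≤ C₁)
    (h5 : ‖δ w - δ₀ * (w - z₀) ^ (I * η₀)‖ ≤ C₂ * ‖w - z₀‖ ^ ((1 : ℝ) / 2)) :
    ‖dbar (lensExtension K R δ z₀ η₀ δ₀) w‖ ≤
      MK * (C₁ ^ 2 * N₂ + 2 * C₁ ^ 5 * M * C₂) / 2 * ‖w - z₀‖ ^ (-(1 : ℝ) / 2)
        + C₁ ^ 2 / 2 * ‖deriv R w.re‖ := by
  have hG := norm_mul_inv_sq_sub_mul_inv_sq_le hδw hq h1 h3 h2 h4 h5 hRw hRz₀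
  have hK1 : ‖K (w - z₀).arg‖ ≤ 1 := by rw [Real.norm_of_nonneg hK01.1]; exact hK01.2
  have hρ : 0 < ‖w - z₀‖ := norm_pos_iff.2 (slitPlane_ne_zero hw)
  have hMK : 0 ≤ MK := (norm_nonneg _).trans hK'
  have hhalf : ‖w - z₀‖ ^ ((1 : ℝ) / 2) / ‖w - z₀‖ = ‖w - z₀‖ ^ (-(1 : ℝ) / 2) := by
    rw [← Real.rpow_sub_one hρ.ne']
    norm_num
  rw [dbar_lensExtension hw hK hR hδ hδw]
  refine (norm_add_le _ _).trans ?_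
  simp only [norm_mul, norm_div, norm_pow, norm_real, norm_I, Complex.norm_conj, norm_inv,
    RCLike.norm_ofNat, mul_one]
  calc _ ≤ MK * ‖w - z₀‖⁻¹ / 2 *
          (C₁ ^ 2 * (N₂ * ‖w - z₀‖ ^ ((1 : ℝ) / 2)) +
            2 * C₁ ^ 5 * M * (C₂ * ‖w - z₀‖ ^ ((1 : ℝ) / 2)))
        + 1 * (‖deriv R w.re‖ / 2) * C₁ ^ 2 := by
        gcongr
        rw [← inv_pow, ← norm_inv]
        exact pow_le_pow_left₀ (norm_nonneg _) h2 2
    _ = _ := by rw [← hhalf]; ring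

end LensExtension

theorem dbar_extension_estimate_general (α z₀ η₀ : ℝ) (hα : 0 < α) (hα' : α < Real.pi / 2)
    (Ω : Set ℂ)
    (hΩ : Ω = {w : ℂ | 0 < (w - (z₀ : ℂ)).arg ∧ (w - (z₀ : ℂ)).arg < α})
    (K : ℝ → ℝ) (hK : ContDiff ℝ 1 K)
    (hK01 : ∀ x ∈ Set.Icc (0:ℝ) α, K x ∈ Set.Icc (0:ℝ) 1)
    (R : ℝ → ℂ) (hR : ContDiff ℝ 1 R) (hRb : ∃ M, ∀ x, ‖R x‖ ≤ M)
    (hR2 : MemLp (deriv R) 2 volume)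
    (δ : ℂ → ℂ) (hδ : DifferentiableOn ℂ δ Ω)
    (δ₀ : ℂ) (hδ₀ : δ₀ ≠ 0) (C₁ C₂ : ℝ) (hC₁ : 0 < C₁) (hC₂ : 0 < C₂)
    (h1 : ∀ w ∈ Ω, ‖δ w‖ ≤ C₁)
    (h2 : ∀ w ∈ Ω, ‖(δ w)⁻¹‖ ≤ C₁)
    (h3 : ∀ w ∈ Ω, ‖δ₀ * (w - (z₀ : ℂ)) ^ (Complex.I * (η₀ : ℂ))‖ ≤ C₁)
    (h4 : ∀ w ∈ Ω, ‖δ₀⁻¹ * (w - (z₀ : ℂ)) ^ (-(Complex.I * (η₀ : ℂ)))‖ ≤ C₁)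
    (h5 : ∀ w ∈ Ω, ‖δ w - δ₀ * (w - (z₀ : ℂ)) ^ (Complex.I * (η₀ : ℂ))‖ ≤
        C₂ * ‖w - (z₀ : ℂ)‖ ^ ((1:ℝ)/2))
    (E : ℂ → ℂ)
    (hE : ∀ w, E w =
      (K ((w - (z₀ : ℂ)).arg) : ℂ) * R w.re * ((δ w) ^ 2)⁻¹
        + (1 - (K ((w - (z₀ : ℂ)).arg) : ℂ)) * R z₀ * (δ₀ ^ 2)⁻¹ *
            (w - (z₀ : ℂ)) ^ (-(2 * Complex.I * (η₀ : ℂ)))) :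
    ∃ C > (0:ℝ), ∀ w ∈ Ω,
      ‖dbar E w‖ ≤ C * (‖w - (z₀ : ℂ)‖ ^ (-(1:ℝ)/2) + ‖deriv R w.re‖) := by
  subst hΩ
  have hαπ : α ≤ π := by linarith [Real.pi_pos]
  obtain ⟨M, hM⟩ := hRb
  obtain ⟨MK, hMK⟩ := (isCompact_Icc (a := (0 : ℝ)) (b := α)).exists_bound_of_continuousOn
    (hK.continuous_deriv le_rfl).continuousOn
  have hM0 : 0 ≤ M := (norm_nonneg _).trans (hM 0)
  have hMK0 : 0 ≤ MK := (norm_nonneg _).trans (hMK 0 ⟨le_rfl, hα.le⟩)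
  have hq : ∀ w ∈ argSector z₀ α, δ₀ * (w - z₀) ^ (I * η₀) ≠ 0 := fun w hw => mul_ne_zero hδ₀
    (by simp [cpow_eq_zero_iff, slitPlane_ne_zero (sub_mem_slitPlane_of_mem_argSector hαπ hw)])
  have hqinv : ∀ w ∈ argSector z₀ α, ‖(δ₀ * (w - z₀) ^ (I * η₀))⁻¹‖ ≤ C₁ := fun w hw =>
    inv_mul_cpow_neg δ₀ (w - z₀) _ ▸ h4 w hw
  have hδne := forall_ne_zero_of_norm_sub_le hα hαπ hδ.continuousOn hC₁ hC₂ h2 hq hqinv h5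
  set N₂ := (eLpNorm (deriv R) 2 volume).toReal
  set A := MK * (C₁ ^ 2 * N₂ + 2 * C₁ ^ 5 * M * C₂) / 2 with hAdef
  have hA : 0 ≤ A := by positivity
  refine ⟨A + C₁ ^ 2 / 2 + 1, by positivity, fun w hw => ?_⟩
  have hθ : (w - z₀).arg ∈ Icc 0 α := Ioo_subset_Icc_self hw
  have hRw : ‖R w.re - R z₀‖ ≤ N₂ * ‖w - z₀‖ ^ ((1 : ℝ) / 2) :=
    (norm_sub_le_eLpNorm_deriv_mul_rpow (hR.differentiable one_ne_zero) hR2 _ _).trans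
      (by gcongr; simpa using abs_re_le_norm (w - z₀))
  have hbound := norm_dbar_lensExtension_le (sub_mem_slitPlane_of_mem_argSector hαπ hw)
    (hK.differentiable one_ne_zero _) (hR.differentiable one_ne_zero _)
    (hδ.differentiableAt ((isOpen_argSector hαπ).mem_nhds hw)) (hδne w hw) (hq w hw) (hMK _ hθ)
    (hK01 _ hθ) (hM z₀) hRw (h1 w hw) (h2 w hw) (h3 w hw) (hqinv w hw) (h5 w hw)
  rw [← hAdef] at hbound
  rw [show E = lensExtension K R δ z₀ η₀ δ₀ from funext hE]
  have hx : 0 ≤ ‖w - z₀‖ ^ (-(1 : ℝ) / 2) := by positivity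
  nlinarith [norm_nonneg (deriv R w.re)]

/-- Bound on the `∂̄`-derivative of the lens-opening extension `E`. -/
theorem dbar_extension_estimate (α z₀ η₀ : ℝ) (hα : 0 < α) (hα' : α < Real.pi / 2)
    (Ω : Set ℂ)
    (hΩ : Ω = {w : ℂ | 0 < (w - (z₀ : ℂ)).arg ∧ (w - (z₀ : ℂ)).arg < α})
    (K : ℝ → ℝ) (hK : ContDiff ℝ 1 K) (hK0 : K 0 = 1) (hKα : K α = 0)
    (hK01 : ∀ x ∈ Set.Icc (0:ℝ) α, K x ∈ Set.Icc (0:ℝ) 1)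
    (R : ℝ → ℂ) (hR : ContDiff ℝ 1 R) (hRb : ∃ M, ∀ x, ‖R x‖ ≤ M)
    (hR2 : MemLp (deriv R) 2 volume)
    (δ : ℂ → ℂ) (hδ : DifferentiableOn ℂ δ Ω)
    (δ₀ : ℂ) (hδ₀ : δ₀ ≠ 0) (C₁ C₂ : ℝ) (hC₁ : 0 < C₁) (hC₂ : 0 < C₂)
    (h1 : ∀ w ∈ Ω, ‖δ w‖ ≤ C₁)
    (h2 : ∀ w ∈ Ω, ‖(δ w)⁻¹‖ ≤ C₁)
    (h3 : ∀ w ∈ Ω, ‖δ₀ * (w - (z₀ : ℂ)) ^ (Complex.I * (η₀ : ℂ))‖ ≤ C₁)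
    (h4 : ∀ w ∈ Ω, ‖δ₀⁻¹ * (w - (z₀ : ℂ)) ^ (-(Complex.I * (η₀ : ℂ)))‖ ≤ C₁)
    (h5 : ∀ w ∈ Ω, ‖δ w - δ₀ * (w - (z₀ : ℂ)) ^ (Complex.I * (η₀ : ℂ))‖ ≤
        C₂ * ‖w - (z₀ : ℂ)‖ ^ ((1:ℝ)/2))
    (E : ℂ → ℂ)
    (hE : ∀ w, E w =
      (K ((w - (z₀ : ℂ)).arg) : ℂ) * R w.re * ((δ w) ^ 2)⁻¹
        + (1 - (K ((w - (z₀ : ℂ)).arg) : ℂ)) * R z₀ * (δ₀ ^ 2)⁻¹ *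
            (w - (z₀ : ℂ)) ^ (-(2 * Complex.I * (η₀ : ℂ)))) :
    ∃ C > (0:ℝ), ∀ w ∈ Ω,
      ‖dbar E w‖ ≤ C * (‖w - (z₀ : ℂ)‖ ^ (-(1:ℝ)/2) + ‖deriv R w.re‖) :=
  dbar_extension_estimate_general α z₀ η₀ hα hα' Ω hΩ K hK hK01 R hR hRb hR2 δ hδ δ₀ hδ₀ C₁ C₂ hC₁
    hC₂ h1 h2 h3 h4 h5 E hE
end

section
/- Let D \subseteq \mathbb{R} be measurable, let \eta : \mathbb{R} \to \mathbb{R} be integrable and essentially bounded, and let z \in \mathbb{C} \setminus \mathbb{R}. Then the integral w = \int_D \frac{\eta(s)}{s - z}\, ds converges absolutely and e^{-\pi \|\eta\|_{L^\infty}} \le |\exp(i w)| \le e^{\pi \|\eta\|_{L^\infty}}. -/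
/-!
Since `‖exp (i w)‖ = e^{-Im w}`, it suffices to bound `|Im w|`. For real `η`,
`Im (η s / (s - z)) = η s · Im z / ((s - Re z)² + (Im z)²)`, and the kernel here is, up to sign,
`π` times the Cauchy density with location `Re z` and scale `|Im z|`, whose total mass is `1`.
Hence `|Im w| ≤ π ‖η‖_∞`. Integrability comes from `|s - z| ≥ |Im z| > 0`.
-/

open MeasureTheory ProbabilityTheory Real

namespace Complex

lemma abs_im_le_norm_ofReal_sub (s : ℝ) (z : ℂ) : |z.im| ≤ ‖(s : ℂ) - z‖ := by
  simpa using abs_im_le_norm ((s : ℂ) - z)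

lemma norm_inv_ofReal_sub_le (s : ℝ) {z : ℂ} (hz : z.im ≠ 0) :
    ‖((s : ℂ) - z)⁻¹‖ ≤ |z.im|⁻¹ := by
  rw [norm_inv]
  exact inv_anti₀ (abs_pos.mpr hz) (abs_im_le_norm_ofReal_sub s z)

lemma abs_im_inv_ofReal_sub (s : ℝ) (z : ℂ) :
    |((s : ℂ) - z)⁻¹.im| = π * cauchyPDFReal z.re (Real.nnabs z.im) s := by
  rw [cauchyPDFReal_def, inv_im, normSq_apply]
  simp only [sub_re, ofReal_re, sub_im, ofReal_im, zero_sub, neg_neg, abs_div,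
    Real.coe_nnabs, ← sq, neg_sq]
  rw [abs_of_nonneg (add_nonneg (sq_nonneg (s - z.re)) (sq_nonneg z.im)), sq_abs]
  field_simp

lemma norm_exp_I_mul (w : ℂ) : ‖exp (I * w)‖ = Real.exp (-w.im) := by
  simp [norm_exp]

end Complex

open Complex in
theorem MeasureTheory.Integrable.div_ofReal_sub {μ : Measure ℝ} {f : ℝ → ℂ}
    (hf : Integrable f μ) {z : ℂ} (hz : z.im ≠ 0) :
    Integrable (fun s => f s / ((s : ℂ) - z)) μ := by
  simpa only [div_eq_mul_inv] using
    hf.mul_bdd (by fun_prop) (ae_of_all _ (norm_inv_ofReal_sub_le · hz))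

theorem MeasureTheory.MemLp.ae_norm_le_toReal_eLpNorm_top {α E : Type*} [MeasurableSpace α]
    {μ : Measure α} [NormedAddCommGroup E] {f : α → E} (hf : MemLp f ⊤ μ) :
    ∀ᵐ x ∂μ, ‖f x‖ ≤ (eLpNorm f ⊤ μ).toReal := by
  filter_upwards [ae_le_eLpNormEssSup (f := f) (μ := μ)] with x hx
  rw [eLpNorm_exponent_top, ← toReal_enorm]
  exact ENNReal.toReal_mono (by simpa [eLpNorm_exponent_top] using hf.eLpNorm_ne_top) hx

open Complex in
theorem abs_im_setIntegral_div_ofReal_sub_le {f : ℝ → ℝ} {M : ℝ} (hf : ∀ᵐ s, |f s| ≤ M)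
    (D : Set ℝ) {z : ℂ} (hz : z.im ≠ 0)
    (hint : IntegrableOn (fun s => (f s : ℂ) / ((s : ℂ) - z)) D) :
    |(∫ s in D, (f s : ℂ) / ((s : ℂ) - z)).im| ≤ π * M := by
  set P := cauchyPDFReal z.re (Real.nnabs z.im)
  have hγ : Real.nnabs z.im ≠ 0 := fun h => hz (by simpa using congrArg NNReal.toReal h)
  have hP0 (s : ℝ) : 0 ≤ P s := (cauchyPDF_pos z.re hγ s).le
  have hPim (s : ℝ) : |((s : ℂ) - z)⁻¹.im| = π * P s := abs_im_inv_ofReal_sub s z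
  have hM : 0 ≤ M := let ⟨s, hs⟩ := hf.exists; (abs_nonneg _).trans hs
  have hP : Integrable fun s => π * M * P s := (integrable_cauchyPDFReal _).const_mul _
  rw [← RCLike.im_to_complex, ← integral_im hint]
  calc |∫ s in D, ((f s : ℂ) / ((s : ℂ) - z)).im|
      ≤ ∫ s in D, π * M * P s := by
        rw [← Real.norm_eq_abs]
        refine norm_integral_le_of_norm_le hP.integrableOn (ae_restrict_of_ae ?_)
        filter_upwards [hf] with s hs
        rw [Real.norm_eq_abs, div_eq_mul_inv, im_ofReal_mul, abs_mul, hPim]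
        linarith [mul_le_mul_of_nonneg_right hs (mul_nonneg pi_pos.le (hP0 s))]
    _ ≤ ∫ s, π * M * P s :=
        setIntegral_le_integral hP (ae_of_all _ fun s =>
          mul_nonneg (mul_nonneg pi_pos.le hM) (hP0 s))
    _ = π * M := by rw [integral_const_mul, integral_cauchyPDFReal_eq_one _ hγ, mul_one]

theorem delta_bounded_general (D : Set ℝ) (η : ℝ → ℝ)
    (hη : Integrable η) (hb : MemLp η ⊤ volume)
    (z : ℂ) (hz : z.im ≠ 0) :
    IntegrableOn (fun s : ℝ => (η s : ℂ) / ((s : ℂ) - z)) D ∧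
    Real.exp (-(Real.pi * (eLpNorm η ⊤ volume).toReal)) ≤
        ‖Complex.exp (Complex.I * ∫ s in D, (η s : ℂ) / ((s : ℂ) - z))‖ ∧
      ‖Complex.exp (Complex.I * ∫ s in D, (η s : ℂ) / ((s : ℂ) - z))‖ ≤
        Real.exp (Real.pi * (eLpNorm η ⊤ volume).toReal) := by
  have hint : IntegrableOn (fun s : ℝ => (η s : ℂ) / ((s : ℂ) - z)) D :=
    (hη.ofReal.div_ofReal_sub hz).integrableOn
  have him := abs_im_setIntegral_div_ofReal_sub_le hb.ae_norm_le_toReal_eLpNorm_top D hz hint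
  rw [Complex.norm_exp_I_mul]
  exact ⟨hint, Real.exp_le_exp.mpr (neg_le_neg (abs_le.mp him).2),
    Real.exp_le_exp.mpr (neg_le.mp (abs_le.mp him).1)⟩

/-- Uniform boundedness of `δ(z)` and `δ(z)⁻¹`: for `η` integrable and
essentially bounded and `z` off the real line, the Cauchy integral
`w = ∫_D η(s)/(s - z) ds` converges absolutely and
`e^{-π‖η‖_∞} ≤ |exp(i w)| ≤ e^{π‖η‖_∞}`. -/
theorem delta_bounded (D : Set ℝ) (hD : MeasurableSet D) (η : ℝ → ℝ)
    (hη : Integrable η) (hb : MemLp η ⊤ volume)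
    (z : ℂ) (hz : z.im ≠ 0) :
    IntegrableOn (fun s : ℝ => (η s : ℂ) / ((s : ℂ) - z)) D ∧
    Real.exp (-(Real.pi * (eLpNorm η ⊤ volume).toReal)) ≤
        ‖Complex.exp (Complex.I * ∫ s in D, (η s : ℂ) / ((s : ℂ) - z))‖ ∧
      ‖Complex.exp (Complex.I * ∫ s in D, (η s : ℂ) / ((s : ℂ) - z))‖ ≤
        Real.exp (Real.pi * (eLpNorm η ⊤ volume).toReal) :=
  delta_bounded_general D η hη hb z hz
end

section
/- For every t > 0, \int_0^\infty \int_0^u (u^2 + v^2)^{-1/4}\, e^{-t u v}\, dv\, du \le 2\, \Gamma(3/4)\, t^{-3/4}. -/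
/-!
Since `(u² + v²)^(-1/4) ≤ u^(-1/2)`, the inner integral is at most
`u^(-1/2) (1 - e^(-tu²)) / (tu)`. Integrating by parts against `d(u^(-s))` turns
`∫₀^∞ u^(-s-1) (1 - e^(-bu²)) du` into the Gamma integral `(2b/s) ∫₀^∞ u^(1-s) e^(-bu²) du`;
at `s = 1/2`, `b = t` this is exactly `2 Γ(3/4) t^(-3/4)`.
-/

open MeasureTheory Set Real Filter Topology

lemma one_sub_exp_neg_le_self (x : ℝ) : 1 - exp (-x) ≤ x := by
  linarith [one_sub_le_exp_neg x]

lemma one_sub_exp_neg_nonneg {x : ℝ} (hx : 0 ≤ x) : 0 ≤ 1 - exp (-x) := by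
  linarith [exp_le_one_iff.mpr (neg_nonpos.mpr hx)]

lemma intervalIntegral.integral_exp_neg_mul {c : ℝ} (hc : c ≠ 0) (u : ℝ) :
    ∫ v in (0:ℝ)..u, exp (-(c * v)) = (1 - exp (-(c * u))) / c := by
  rw [intervalIntegral.integral_comp_mul_left (fun y => exp (-y)) hc,
    intervalIntegral.integral_comp_neg (fun y => exp y), integral_exp]
  simp only [mul_zero, neg_zero, exp_zero, smul_eq_mul]
  field_simp

lemma rpow_sq_add_sq_le {a u : ℝ} (ha : a ≤ 0) (hu : 0 < u) (v : ℝ) :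
    (u ^ 2 + v ^ 2) ^ a ≤ u ^ (2 * a) := by
  rw [rpow_mul hu.le, rpow_two]
  exact rpow_le_rpow_of_nonpos (by positivity) (le_add_of_nonneg_right (sq_nonneg v)) ha

lemma integral_rpow_sq_add_sq_mul_exp_neg_le {a c u : ℝ} (ha : a ≤ 0) (hc : c ≠ 0) (hu : 0 < u) :
    ∫ v in (0:ℝ)..u, (u ^ 2 + v ^ 2) ^ a * exp (-(c * v)) ≤
      u ^ (2 * a) * ((1 - exp (-(c * u))) / c) := by
  rw [← intervalIntegral.integral_exp_neg_mul hc, ← intervalIntegral.integral_const_mul]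
  refine intervalIntegral.integral_mono_on hu.le ?_ ?_ fun v _ =>
    mul_le_mul_of_nonneg_right (rpow_sq_add_sq_le ha hu v) (exp_nonneg _)
  · have hpos : ∀ v : ℝ, u ^ 2 + v ^ 2 ≠ 0 := fun v => by positivity
    exact (((continuous_const.add (continuous_pow 2)).rpow_const
      fun v => Or.inl (hpos v)).mul (by fun_prop)).intervalIntegrable _ _
  · exact (continuous_const.mul (by fun_prop)).intervalIntegrable _ _

section
variable {b s x : ℝ}

lemma one_sub_exp_neg_mul_sq_nonneg (hb : 0 ≤ b) (x : ℝ) : 0 ≤ 1 - exp (-b * x ^ 2) := by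
  rw [neg_mul]; exact one_sub_exp_neg_nonneg (by positivity)

lemma rpow_mul_one_sub_exp_neg_mul_sq_le_mul_rpow (hx : 0 < x) (s : ℝ) :
    x ^ s * (1 - exp (-b * x ^ 2)) ≤ b * x ^ (s + 2) := by
  rw [rpow_add hx, rpow_two, mul_left_comm, neg_mul]
  exact mul_le_mul_of_nonneg_left (one_sub_exp_neg_le_self _) (rpow_nonneg hx.le s)

lemma rpow_mul_one_sub_exp_neg_mul_sq_le_rpow (hx : 0 < x) (s : ℝ) :
    x ^ s * (1 - exp (-b * x ^ 2)) ≤ x ^ s :=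
  mul_le_of_le_one_right (rpow_nonneg hx.le s) (sub_le_self _ (exp_nonneg _))

lemma integrableOn_rpow_mul_one_sub_exp_neg_mul_sq (hb : 0 ≤ b) (hs0 : 0 < s) (hs2 : s < 2) :
    IntegrableOn (fun x => x ^ (-s - 1) * (1 - exp (-b * x ^ 2))) (Ioi 0) := by
  have hmeas : AEStronglyMeasurable (fun x : ℝ => x ^ (-s - 1) * (1 - exp (-b * x ^ 2))) := by
    fun_prop
  have hnorm : ∀ x ∈ Ioi (0:ℝ), ‖x ^ (-s - 1) * (1 - exp (-b * x ^ 2))‖ =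
      x ^ (-s - 1) * (1 - exp (-b * x ^ 2)) := fun x hx =>
    norm_of_nonneg (mul_nonneg (rpow_nonneg (le_of_lt hx) _) (one_sub_exp_neg_mul_sq_nonneg hb x))
  rw [← Ioc_union_Ioi_eq_Ioi zero_le_one]
  refine IntegrableOn.union ?_ ?_
  · refine Integrable.mono' (((intervalIntegral.intervalIntegrable_rpow'
      (r := -s - 1 + 2) (by linarith)).1).const_mul b) hmeas.restrict ?_
    filter_upwards [ae_restrict_mem measurableSet_Ioc] with x hx
    rw [hnorm x hx.1]
    exact rpow_mul_one_sub_exp_neg_mul_sq_le_mul_rpow hx.1 _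
  · refine Integrable.mono' (integrableOn_Ioi_rpow_of_lt (a := -s - 1) (by linarith) zero_lt_one)
      hmeas.restrict ?_
    filter_upwards [ae_restrict_mem measurableSet_Ioi] with x (hx : 1 < x)
    rw [hnorm x (zero_lt_one.trans hx)]
    exact rpow_mul_one_sub_exp_neg_mul_sq_le_rpow (zero_lt_one.trans hx) _

lemma tendsto_rpow_neg_mul_one_sub_exp_neg_mul_sq_nhdsGT_zero (hb : 0 ≤ b) (hs2 : s < 2) :
    Tendsto (fun x => x ^ (-s) * (1 - exp (-b * x ^ 2))) (𝓝[>] 0) (𝓝 0) := by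
  have hlim : Tendsto (fun x : ℝ => b * x ^ (-s + 2)) (𝓝[>] 0) (𝓝 0) := by
    have hcont : ContinuousAt (fun x : ℝ => b * x ^ (-s + 2)) 0 :=
      continuousAt_const.mul (continuousAt_id.rpow_const (Or.inr (by linarith)))
    simpa [zero_rpow (show -s + 2 ≠ 0 by linarith)] using
      hcont.tendsto.mono_left nhdsWithin_le_nhds
  refine squeeze_zero' ?_ ?_ hlim <;> filter_upwards [self_mem_nhdsWithin] with x (hx : 0 < x)
  · exact mul_nonneg (rpow_nonneg hx.le _) (one_sub_exp_neg_mul_sq_nonneg hb x)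
  · exact rpow_mul_one_sub_exp_neg_mul_sq_le_mul_rpow hx _

lemma tendsto_rpow_neg_mul_one_sub_exp_neg_mul_sq_atTop (hb : 0 ≤ b) (hs0 : 0 < s) :
    Tendsto (fun x => x ^ (-s) * (1 - exp (-b * x ^ 2))) atTop (𝓝 0) := by
  refine squeeze_zero' ?_ ?_ (tendsto_rpow_neg_atTop hs0) <;>
    filter_upwards [Ioi_mem_atTop 0] with x (hx : 0 < x)
  · exact mul_nonneg (rpow_nonneg hx.le _) (one_sub_exp_neg_mul_sq_nonneg hb x)
  · exact rpow_mul_one_sub_exp_neg_mul_sq_le_rpow hx _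

lemma integral_rpow_mul_one_sub_exp_neg_mul_sq (hb : 0 < b) (hs0 : 0 < s) (hs2 : s < 2) :
    ∫ x in Ioi (0:ℝ), x ^ (-s - 1) * (1 - exp (-b * x ^ 2)) =
      b ^ (s / 2) / s * Gamma (1 - s / 2) := by
  have hderiv_rpow : ∀ x ∈ Ioi (0:ℝ), HasDerivAt (fun x => x ^ (-s)) (-s * x ^ (-s - 1)) x :=
    fun x hx => hasDerivAt_rpow_const (Or.inl (ne_of_gt hx))
  have hderiv_exp : ∀ x ∈ Ioi (0:ℝ),
      HasDerivAt (fun x => 1 - exp (-b * x ^ 2)) (2 * b * x * exp (-b * x ^ 2)) x := fun x _ =>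
    (((hasDerivAt_pow 2 x).const_mul (-b)).exp.const_sub 1).congr_deriv (by norm_num; ring)
  have hgauss : ∀ x ∈ Ioi (0:ℝ),
      x ^ (-s) * (2 * b * x * exp (-b * x ^ 2)) = 2 * b * (x ^ (1 - s) * exp (-b * x ^ 2)) :=
    fun x (hx : 0 < x) => by rw [sub_eq_neg_add, rpow_add_one hx.ne']; ring
  have hint_gauss :
      IntegrableOn ((fun x => x ^ (-s)) * fun x => 2 * b * x * exp (-b * x ^ 2)) (Ioi 0) :=
    IntegrableOn.congr_fun
      ((integrableOn_rpow_mul_exp_neg_mul_sq hb (s := 1 - s) (by linarith)).const_mul (2 * b))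
      (fun x hx => (hgauss x hx).symm) measurableSet_Ioi
  have hint :
      IntegrableOn ((fun x => -s * x ^ (-s - 1)) * fun x => 1 - exp (-b * x ^ 2)) (Ioi 0) := by
    simp only [Pi.mul_def, mul_assoc]
    exact (integrableOn_rpow_mul_one_sub_exp_neg_mul_sq hb.le hs0 hs2).const_mul (-s)
  have hparts := integral_Ioi_mul_deriv_eq_deriv_mul hderiv_rpow hderiv_exp hint_gauss hint
    (tendsto_rpow_neg_mul_one_sub_exp_neg_mul_sq_nhdsGT_zero hb.le hs2)
    (tendsto_rpow_neg_mul_one_sub_exp_neg_mul_sq_atTop hb.le hs0)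
  rw [setIntegral_congr_fun measurableSet_Ioi hgauss] at hparts
  simp only [mul_assoc, integral_const_mul] at hparts
  have hgamma : ∫ x in Ioi (0:ℝ), x ^ (1 - s) * exp (-b * x ^ 2) =
      b ^ (s / 2) / b * (1 / 2) * Gamma (1 - s / 2) := by
    have h := integral_rpow_mul_exp_neg_mul_rpow two_pos (show -1 < 1 - s by linarith) hb
    rw [show -(1 - s + 1) / 2 = s / 2 - 1 by ring, show (1 - s + 1) / 2 = 1 - s / 2 by ring,
      rpow_sub_one hb.ne'] at h
    simpa only [rpow_two] using h
  rw [hgamma] at hparts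
  field_simp at hparts ⊢
  linarith

end

theorem sector_double_integral_quarter (t : ℝ) (ht : 0 < t) :
    (∫ u in Set.Ioi (0:ℝ),
        ∫ v in (0:ℝ)..u, (u ^ 2 + v ^ 2) ^ (-(1:ℝ)/4) * Real.exp (-(t * u * v))) ≤
      2 * Real.Gamma (3/4) * t ^ (-(3:ℝ)/4) := by
  have hnonneg : ∀ u ∈ Ioi (0:ℝ),
      0 ≤ ∫ v in (0:ℝ)..u, (u ^ 2 + v ^ 2) ^ (-(1:ℝ)/4) * exp (-(t * u * v)) :=
    fun u hu => intervalIntegral.integral_nonneg (le_of_lt hu) fun v _ => by positivity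
  have hbound : ∀ u ∈ Ioi (0:ℝ),
      ∫ v in (0:ℝ)..u, (u ^ 2 + v ^ 2) ^ (-(1:ℝ)/4) * exp (-(t * u * v)) ≤
        t⁻¹ * (u ^ (-(1/2:ℝ) - 1) * (1 - exp (-t * u ^ 2))) := fun u (hu : 0 < u) => by
    refine (integral_rpow_sq_add_sq_mul_exp_neg_le (by norm_num) (mul_pos ht hu).ne' hu).trans_eq
      ?_
    rw [show 2 * (-(1:ℝ)/4) = -(1/2) by norm_num, rpow_sub_one hu.ne']
    field_simp
  calc _ ≤ ∫ u in Ioi (0:ℝ), t⁻¹ * (u ^ (-(1/2:ℝ) - 1) * (1 - exp (-t * u ^ 2))) :=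
        integral_mono_of_nonneg ((ae_restrict_iff' measurableSet_Ioi).2 (ae_of_all _ hnonneg))
          ((integrableOn_rpow_mul_one_sub_exp_neg_mul_sq ht.le (by norm_num)
            (by norm_num)).const_mul _)
          ((ae_restrict_iff' measurableSet_Ioi).2 (ae_of_all _ hbound))
    _ = t⁻¹ * (t ^ ((1/2:ℝ) / 2) / (1/2) * Gamma (1 - (1/2) / 2)) := by
        rw [integral_const_mul,
          integral_rpow_mul_one_sub_exp_neg_mul_sq ht (by norm_num) (by norm_num)]
    _ = 2 * Gamma (3/4) * t ^ (-(3:ℝ)/4) := by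
        rw [show -(3:ℝ)/4 = (1/2) / 2 - 1 by norm_num, rpow_sub_one ht.ne']
        norm_num
        ring
end

section
/- For every t > 0, \int_0^\infty \int_0^u (u^2 + v^2)^{-3/4}\, e^{-t u v}\, dv\, du \le \frac{2}{3}\, \Gamma(1/4)\, t^{-1/4}. -/
/-!
Substituting `v = u s` and dropping `v²` bounds the inner integral by
`∫₀¹ u^(1-2a) e^(-t s u²) ds`. After exchanging the order of integration, the `u`-integral is a
Gamma integral equal to `Γ(1-a)/2 · (t s)^(a-1)`, and integrating `s^(a-1)` over `(0, 1]`
contributes the factor `1/a`. For `a = 3/4` this is `2/3 · Γ(1/4) · t^(-1/4)`.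
-/

open MeasureTheory Set Real

theorem integral_rpow_mul_exp_neg_mul_sq {q b : ℝ} (hq : -1 < q) (hb : 0 < b) :
    ∫ x in Ioi (0 : ℝ), x ^ q * exp (-b * x ^ 2) =
      b ^ (-(q + 1) / 2) * (1 / 2) * Gamma ((q + 1) / 2) := by
  simpa only [rpow_two] using integral_rpow_mul_exp_neg_mul_rpow two_pos hq hb

section Sector

variable {a t : ℝ}

theorem integral_sector_majorant_Ioi (ha : a < 1) (ht : 0 < t) {s : ℝ} (hs : 0 < s) :
    ∫ u in Ioi (0 : ℝ), u ^ (1 - 2 * a) * exp (-(t * s) * u ^ 2) =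
      Gamma (1 - a) / 2 * t ^ (a - 1) * s ^ (a - 1) := by
  rw [integral_rpow_mul_exp_neg_mul_sq (by linarith) (mul_pos ht hs),
    show -(1 - 2 * a + 1) / 2 = a - 1 by ring, show (1 - 2 * a + 1) / 2 = 1 - a by ring,
    mul_rpow ht.le hs.le]
  ring

theorem mul_rpow_neg_sq_add_sq_le (ha : 0 ≤ a) {u : ℝ} (hu : 0 < u) (w : ℝ) :
    u * (u ^ 2 + w ^ 2) ^ (-a) ≤ u ^ (1 - 2 * a) := by
  calc u * (u ^ 2 + w ^ 2) ^ (-a) ≤ u * (u ^ 2) ^ (-a) :=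
        mul_le_mul_of_nonneg_left
          (rpow_le_rpow_of_nonpos (by positivity) (by nlinarith) (by linarith)) hu.le
    _ = u ^ (1 - 2 * a) := by
        rw [sub_eq_add_neg, rpow_add hu, rpow_one, ← rpow_natCast, ← rpow_mul hu.le]
        norm_num

theorem intervalIntegral_sector_le (ha : 0 ≤ a) {u : ℝ} (hu : 0 < u) :
    ∫ v in (0 : ℝ)..u, (u ^ 2 + v ^ 2) ^ (-a) * exp (-(t * u * v)) ≤
      ∫ s in Ioc (0 : ℝ) 1, u ^ (1 - 2 * a) * exp (-(t * s) * u ^ 2) := by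
  have hsub := intervalIntegral.smul_integral_comp_mul_left
    (fun v => (u ^ 2 + v ^ 2) ^ (-a) * exp (-(t * u * v))) (a := 0) (b := 1) u
  simp only [mul_zero, mul_one, smul_eq_mul] at hsub
  rw [← hsub, ← intervalIntegral.integral_const_mul, ← intervalIntegral.integral_of_le zero_le_one]
  refine intervalIntegral.integral_mono_on zero_le_one (Continuous.intervalIntegrable ?_ _ _)
    (Continuous.intervalIntegrable (by fun_prop) _ _) fun s _ => ?_
  · refine continuous_const.mul (Continuous.mul ?_ (by fun_prop))
    exact (by fun_prop : Continuous fun s => u ^ 2 + (u * s) ^ 2).rpow_const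
      fun s => Or.inl (by positivity)
  · rw [← mul_assoc, show -(t * s) * u ^ 2 = -(t * u * (u * s)) by ring]
    gcongr
    exact mul_rpow_neg_sq_add_sq_le ha hu _

theorem integrable_sector_majorant (ha₀ : 0 < a) (ha₁ : a < 1) (ht : 0 < t) :
    Integrable (fun p : ℝ × ℝ => p.1 ^ (1 - 2 * a) * exp (-(t * p.2) * p.1 ^ 2))
      ((volume.restrict (Ioi 0)).prod (volume.restrict (Ioc 0 1))) := by
  refine (integrable_prod_iff' (by fun_prop)).2 ⟨?_, ?_⟩
  · filter_upwards [ae_restrict_mem measurableSet_Ioc] with s hs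
    exact integrableOn_rpow_mul_exp_neg_mul_sq (mul_pos ht hs.1) (by linarith)
  · have hpow : IntegrableOn (fun s : ℝ => Gamma (1 - a) / 2 * t ^ (a - 1) * s ^ (a - 1))
        (Ioc 0 1) :=
      ((intervalIntegrable_iff_integrableOn_Ioc_of_le zero_le_one).1
        (intervalIntegral.intervalIntegrable_rpow' (by linarith))).const_mul _
    refine hpow.congr_fun (fun s hs => ?_) measurableSet_Ioc
    have hnorm : ∀ u ∈ Ioi (0 : ℝ), ‖u ^ (1 - 2 * a) * exp (-(t * s) * u ^ 2)‖ =
        u ^ (1 - 2 * a) * exp (-(t * s) * u ^ 2) := fun u hu =>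
      norm_of_nonneg (by have := hu.out; positivity)
    rw [setIntegral_congr_fun measurableSet_Ioi hnorm, integral_sector_majorant_Ioi ha₁ ht hs.1]

theorem integral_sector_le (ha₀ : 0 < a) (ha₁ : a < 1) (ht : 0 < t) :
    ∫ u in Ioi (0 : ℝ), ∫ v in (0 : ℝ)..u, (u ^ 2 + v ^ 2) ^ (-a) * exp (-(t * u * v)) ≤
      Gamma (1 - a) / (2 * a) * t ^ (a - 1) := by
  have hint := integrable_sector_majorant ha₀ ha₁ ht
  calc ∫ u in Ioi (0 : ℝ), ∫ v in (0 : ℝ)..u, (u ^ 2 + v ^ 2) ^ (-a) * exp (-(t * u * v))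
      ≤ ∫ u in Ioi (0 : ℝ), ∫ s in Ioc (0 : ℝ) 1, u ^ (1 - 2 * a) * exp (-(t * s) * u ^ 2) := by
        refine integral_mono_of_nonneg ?_ hint.integral_prod_left ?_ <;>
          filter_upwards [ae_restrict_mem measurableSet_Ioi] with u hu
        · exact intervalIntegral.integral_nonneg hu.out.le fun v _ => by positivity
        · exact intervalIntegral_sector_le ha₀.le hu
    _ = ∫ s in Ioc (0 : ℝ) 1, ∫ u in Ioi (0 : ℝ), u ^ (1 - 2 * a) * exp (-(t * s) * u ^ 2) :=
        integral_integral_swap hint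
    _ = ∫ s in Ioc (0 : ℝ) 1, Gamma (1 - a) / 2 * t ^ (a - 1) * s ^ (a - 1) :=
        setIntegral_congr_fun measurableSet_Ioc fun s hs => integral_sector_majorant_Ioi ha₁ ht hs.1
    _ = Gamma (1 - a) / (2 * a) * t ^ (a - 1) := by
        rw [integral_const_mul, ← intervalIntegral.integral_of_le zero_le_one,
          integral_rpow (Or.inl (by linarith)), one_rpow, zero_rpow (by linarith)]
        field_simp [ha₀.ne']
        ring

end Sector

theorem sector_double_integral_three_quarter (t : ℝ) (ht : 0 < t) :
    (∫ u in Set.Ioi (0:ℝ),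
        ∫ v in (0:ℝ)..u, (u ^ 2 + v ^ 2) ^ (-(3:ℝ)/4) * Real.exp (-(t * u * v))) ≤
      2 / 3 * Real.Gamma (1/4) * t ^ (-(1:ℝ)/4) := by
  convert integral_sector_le (a := 3 / 4) (by norm_num) (by norm_num) ht using 2 <;> norm_num
  ring
end

section
/- Let n \ge 3 be an odd integer, let f \in L^2(\mathbb{R}) be nonnegative, and let t > 0, \varepsilon > 0, M > 0. Then \int_{\{|u| \ge M\varepsilon\}} f(u) \left( \int_0^\varepsilon e^{-n t v u^{n-1}}\, dv \right) du \le \frac{1}{n t}\, \|f\|_{L^2(\mathbb{R})} \left( \frac{2}{(2n-3)\,(M\varepsilon)^{2n-3}} \right)^{1/2}. -/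
/-!
Since `n - 1` is even, `u ^ (n - 1) = |u| ^ (n - 1) > 0` for `u ≠ 0`, so the inner integral is at
most `∫₀^∞ e^{-n t |u|^{n-1} v} dv = (n t)⁻¹ |u|^{1-n}`. Cauchy–Schwarz on `{|u| ≥ Mε}` then bounds
the outer integral by `(n t)⁻¹ ‖f‖₂` times the `L²` norm of `|u|^{1-n}` there, and
`∫_{|u| ≥ a} |u|^{-m} du = 2 a^{1-m} / (m - 1)` for `m ≥ 2`.
-/

open MeasureTheory Set Real

theorem integral_exp_neg_mul_le_inv {b : ℝ} (hb : 0 < b) {ε : ℝ} (hε : 0 ≤ ε) :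
    ∫ v in (0 : ℝ)..ε, exp (-(b * v)) ≤ b⁻¹ := by
  have hIoi : ∫ v in Ioi (0 : ℝ), exp (-b * v) = b⁻¹ := by
    rw [integral_exp_mul_Ioi (neg_neg_iff_pos.2 hb), mul_zero, exp_zero, neg_div_neg_eq, one_div]
  simp_rw [← neg_mul]
  rw [intervalIntegral.integral_of_le hε, ← hIoi]
  exact setIntegral_mono_set (exp_neg_integrableOn_Ioi 0 hb)
    (Filter.Eventually.of_forall fun _ => (exp_pos _).le) Ioc_subset_Ioi_self.eventuallyLE

theorem norm_integral_exp_neg_mul_pow_le {c ε : ℝ} (hc : 0 < c) (hε : 0 ≤ ε) {k : ℕ}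
    (hk : Even k) {u : ℝ} (hu : u ≠ 0) :
    ‖∫ v in (0 : ℝ)..ε, exp (-(c * v * u ^ k))‖ ≤ c⁻¹ * (|u| ^ k)⁻¹ := by
  have hb : 0 < c * |u| ^ k := mul_pos hc (pow_pos (abs_pos.2 hu) k)
  simp_rw [mul_right_comm c _ (u ^ k), ← hk.pow_abs u]
  rw [Real.norm_of_nonneg (intervalIntegral.integral_nonneg hε fun _ _ => (exp_pos _).le),
    ← mul_inv]
  exact integral_exp_neg_mul_le_inv hb hε

theorem measurableSet_setOf_le_abs (a : ℝ) : MeasurableSet {u : ℝ | a ≤ |u|} :=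
  measurableSet_le measurable_const measurable_abs

theorem indicator_setOf_le_abs {a : ℝ} (ha : 0 < a) (h : ℝ → ℝ) :
    {u : ℝ | a ≤ |u|}.indicator (fun u => h |u|) =
      fun u => (Ici a).indicator h u + (Ici a).indicator h (-u) := by
  ext u
  rcases le_or_gt 0 u with hu | hu
  · have : ¬ a ≤ -u := by linarith
    simp [indicator, abs_of_nonneg hu, this]
  · have : ¬ a ≤ u := by linarith
    simp [indicator, abs_of_neg hu, this]

theorem integrableOn_comp_abs_setOf_le_abs {a : ℝ} (ha : 0 < a) {h : ℝ → ℝ}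
    (hh : IntegrableOn h (Ici a)) : IntegrableOn (fun u => h |u|) {u : ℝ | a ≤ |u|} := by
  rw [← integrable_indicator_iff (measurableSet_setOf_le_abs a), indicator_setOf_le_abs ha]
  have hi := (integrable_indicator_iff measurableSet_Ici).2 hh
  exact hi.add hi.comp_neg

theorem setIntegral_comp_abs_setOf_le_abs {a : ℝ} (ha : 0 < a) {h : ℝ → ℝ}
    (hh : IntegrableOn h (Ici a)) :
    ∫ u in {u : ℝ | a ≤ |u|}, h |u| = 2 * ∫ x in Ici a, h x := by
  have hi := (integrable_indicator_iff measurableSet_Ici).2 hh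
  rw [← integral_indicator (measurableSet_setOf_le_abs a), indicator_setOf_le_abs ha, integral_add hi hi.comp_neg,
    integral_neg_eq_self, integral_indicator measurableSet_Ici]
  ring

theorem inv_pow_eqOn_rpow_neg {a : ℝ} (ha : 0 < a) (m : ℕ) :
    EqOn (fun x : ℝ => (x ^ m)⁻¹) (fun x => x ^ (-(m : ℝ))) (Ici a) := fun x hx => by
  simp only [rpow_neg (ha.le.trans hx), rpow_natCast]

theorem integrableOn_Ici_inv_pow {a : ℝ} (ha : 0 < a) {m : ℕ} (hm : 2 ≤ m) :
    IntegrableOn (fun x : ℝ => (x ^ m)⁻¹) (Ici a) := by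
  have hm' : -(m : ℝ) < -1 := by rw [neg_lt_neg_iff]; exact_mod_cast hm
  rw [integrableOn_Ici_iff_integrableOn_Ioi]
  exact (integrableOn_Ioi_rpow_of_lt hm' ha).congr_fun
    (fun x hx => (inv_pow_eqOn_rpow_neg ha m (Ioi_subset_Ici_self hx)).symm) measurableSet_Ioi

theorem integral_Ici_inv_pow {a : ℝ} (ha : 0 < a) {m : ℕ} (hm : 2 ≤ m) :
    ∫ x in Ici a, (x ^ m)⁻¹ = (((m : ℝ) - 1) * a ^ (m - 1))⁻¹ := by
  have hm' : -(m : ℝ) < -1 := by rw [neg_lt_neg_iff]; exact_mod_cast hm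
  rw [setIntegral_congr_fun measurableSet_Ici (inv_pow_eqOn_rpow_neg ha m),
    integral_Ici_eq_integral_Ioi, integral_Ioi_rpow_of_lt hm' ha]
  have : -(m : ℝ) + 1 = -((m - 1 : ℕ) : ℝ) := by push_cast [Nat.cast_sub (by omega : 1 ≤ m)]; ring
  rw [this, rpow_neg ha.le, rpow_natCast, Nat.cast_sub (by omega : 1 ≤ m), Nat.cast_one]
  field_simp

theorem integral_norm_mul_norm_le_eLpNorm_mul_eLpNorm {α E : Type*} [MeasurableSpace α]
    {μ : Measure α} [NormedAddCommGroup E] {f g : α → E} (hf : MemLp f 2 μ) (hg : MemLp g 2 μ) :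
    ∫ x, ‖f x‖ * ‖g x‖ ∂μ ≤ (eLpNorm f 2 μ).toReal * (eLpNorm g 2 μ).toReal := by
  have hnorm : ∀ {h : α → E}, MemLp h 2 μ →
      (eLpNorm h 2 μ).toReal = (∫ x, ‖h x‖ ^ (2 : ℝ) ∂μ) ^ (1 / 2 : ℝ) := fun hh => by
    rw [hh.eLpNorm_eq_integral_rpow_norm two_ne_zero ENNReal.ofNat_ne_top,
      ENNReal.toReal_ofReal (by positivity)]
    norm_num
  rw [hnorm hf, hnorm hg]
  exact integral_mul_norm_le_Lp_mul_Lq .two_two (by simpa using hf) (by simpa using hg)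

theorem sq_inv_abs_pow (k : ℕ) (u : ℝ) : ((|u| ^ k)⁻¹) ^ 2 = (|u| ^ (2 * k))⁻¹ := by
  rw [inv_pow, ← pow_mul, mul_comm]

theorem memLp_inv_abs_pow_setOf_le_abs {a : ℝ} (ha : 0 < a) {k : ℕ} (hk : 1 ≤ k) :
    MemLp (fun u : ℝ => (|u| ^ k)⁻¹) 2 (volume.restrict {u : ℝ | a ≤ |u|}) := by
  refine (memLp_two_iff_integrable_sq (by fun_prop)).2 ?_
  simp_rw [sq_inv_abs_pow]
  exact integrableOn_comp_abs_setOf_le_abs ha (integrableOn_Ici_inv_pow ha (by omega))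

theorem eLpNorm_inv_abs_pow_setOf_le_abs {a : ℝ} (ha : 0 < a) {k : ℕ} (hk : 1 ≤ k) :
    (eLpNorm (fun u : ℝ => (|u| ^ k)⁻¹) 2 (volume.restrict {u : ℝ | a ≤ |u|})).toReal =
      (2 / ((2 * (k : ℝ) - 1) * a ^ (2 * k - 1))) ^ (1 / 2 : ℝ) := by
  rw [(memLp_inv_abs_pow_setOf_le_abs ha hk).eLpNorm_eq_integral_rpow_norm two_ne_zero
    ENNReal.ofNat_ne_top, ENNReal.toReal_ofReal (by positivity)]
  simp_rw [ENNReal.toReal_ofNat, rpow_two, Real.norm_eq_abs, sq_abs, sq_inv_abs_pow]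
  rw [setIntegral_comp_abs_setOf_le_abs ha (integrableOn_Ici_inv_pow ha (by omega)),
    integral_Ici_inv_pow ha (by omega)]
  push_cast
  norm_num [div_eq_mul_inv]

theorem fast_decay_delta_two_general (n : ℕ) (hn : Odd n) (h3 : 3 ≤ n)
    (f : ℝ → ℝ) (hf2 : MemLp f 2 volume)
    (t ε M : ℝ) (ht : 0 < t) (hε : 0 < ε) (hM : 0 < M) :
    (∫ u in {u : ℝ | M * ε ≤ |u|},
        f u * ∫ v in (0:ℝ)..ε, Real.exp (-((n : ℝ) * t * v * u ^ (n - 1)))) ≤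
      1 / ((n : ℝ) * t) * (eLpNorm f 2 volume).toReal *
        (2 / ((2 * (n : ℝ) - 3) * (M * ε) ^ (2 * n - 3))) ^ ((1:ℝ)/2) := by
  set S := {u : ℝ | M * ε ≤ |u|}
  set c := (n : ℝ) * t
  set φ : ℝ → ℝ := fun u => (|u| ^ (n - 1))⁻¹
  have ha : 0 < M * ε := mul_pos hM hε
  have hφ : MemLp φ 2 (volume.restrict S) := memLp_inv_abs_pow_setOf_le_abs ha (by omega)
  have hf : MemLp f 2 (volume.restrict S) := hf2.restrict S
  have hpoint : ∀ u ∈ S, ‖f u * ∫ v in (0:ℝ)..ε, exp (-(c * v * u ^ (n - 1)))‖ ≤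
      c⁻¹ * (‖f u‖ * ‖φ u‖) := fun u hu => by
    rw [norm_mul, Real.norm_of_nonneg (by positivity : 0 ≤ φ u), mul_left_comm]
    gcongr
    exact norm_integral_exp_neg_mul_pow_le (by positivity) hε.le (hn.tsub_odd odd_one)
      (abs_pos.1 (ha.trans_le hu))
  have hexp : 2 * ((n - 1 : ℕ) : ℝ) - 1 = 2 * (n : ℝ) - 3 := by
    push_cast [Nat.cast_sub (by omega : 1 ≤ n)]; ring
  calc _ ≤ ‖∫ u in S, f u * ∫ v in (0:ℝ)..ε, exp (-(c * v * u ^ (n - 1)))‖ := le_norm_self _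
    _ ≤ ∫ u in S, c⁻¹ * (‖f u‖ * ‖φ u‖) :=
        norm_integral_le_of_norm_le ((hf.norm.integrable_mul hφ.norm).const_mul _)
          ((ae_restrict_iff' (measurableSet_setOf_le_abs _)).2 (.of_forall hpoint))
    _ = c⁻¹ * ∫ u in S, ‖f u‖ * ‖φ u‖ := integral_const_mul _ _
    _ ≤ c⁻¹ * ((eLpNorm f 2 (volume.restrict S)).toReal *
          (eLpNorm φ 2 (volume.restrict S)).toReal) := by
        gcongr
        exact integral_norm_mul_norm_le_eLpNorm_mul_eLpNorm hf hφ
    _ ≤ c⁻¹ * ((eLpNorm f 2 volume).toReal * (eLpNorm φ 2 (volume.restrict S)).toReal) := by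
        gcongr
        exacts [hf2.eLpNorm_ne_top, Measure.restrict_le_self]
    _ = _ := by
        rw [eLpNorm_inv_abs_pow_setOf_le_abs ha (by omega), hexp,
          show 2 * (n - 1) - 1 = 2 * n - 3 by omega]
        ring

/-- Estimate of `Δ₂` (the region `|u| ≥ Mε`) in the fast decaying region. -/
theorem fast_decay_delta_two (n : ℕ) (hn : Odd n) (h3 : 3 ≤ n)
    (f : ℝ → ℝ) (hf2 : MemLp f 2 volume) (hfnn : ∀ u, 0 ≤ f u)
    (t ε M : ℝ) (ht : 0 < t) (hε : 0 < ε) (hM : 0 < M) :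
    (∫ u in {u : ℝ | M * ε ≤ |u|},
        f u * ∫ v in (0:ℝ)..ε, Real.exp (-((n : ℝ) * t * v * u ^ (n - 1)))) ≤
      1 / ((n : ℝ) * t) * (eLpNorm f 2 volume).toReal *
        (2 / ((2 * (n : ℝ) - 3) * (M * ε) ^ (2 * n - 3))) ^ ((1:ℝ)/2) :=
  fast_decay_delta_two_general n hn h3 f hf2 t ε M ht hε hM
end
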